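/- The class of discrete phase-type (PH) distributions on ℕ is closed under geometric mixtures: if q is a discrete PH distribution and p ∈ (0,1), then the geometric mixture n ↦ ∑_{k=0}^{∞} (1−p) p^k q^{∗k} n (where q^{∗k} is the k-fold convolution of q with itself, and q^{∗0} is the point mass at 0) is a discrete PH distribution. -/

import Mathlib

open Matrix

/-- `p` is a probability distribution on ℕ. -/
def IsProbDist (p : ℕ → ℝ) : Prop :=
  (∀ n, 0 ≤ p n) ∧ HasSum p 1

/-- `p` is a discrete phase-type (PH) distribution on ℕ. -/
def IsPH (p : ℕ → ℝ) : Prop :=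
  IsProbDist p ∧
  ∃ m : ℕ, 1 ≤ m ∧
    ∃ (α : Fin m → ℝ) (T : Matrix (Fin m) (Fin m) ℝ),
      (∀ i, 0 ≤ α i) ∧ (∑ i, α i) ≤ 1 ∧
      (∀ i j, 0 ≤ T i j) ∧ (∀ i, (∑ j, T i j) ≤ 1) ∧
      p 0 = 1 - ∑ i, α i ∧
      ∀ n, 1 ≤ n → p n = α ⬝ᵥ (T ^ (n - 1)).mulVec (fun i => 1 - ∑ j, T i j)


/-- Convolution of two sequences on ℕ. -/
def conv (q₁ q₂ : ℕ → ℝ) (n : ℕ) : ℝ :=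
  ∑ k ∈ Finset.range (n + 1), q₁ k * q₂ (n - k)

/-- `k`-fold convolution power of `q`; `convPow q 0` is the point mass at `0`. -/
def convPow (q : ℕ → ℝ) : ℕ → ℕ → ℝ
  | 0 => fun n => if n = 0 then 1 else 0
  | k + 1 => conv q (convPow q k)

/-- Geometric mixture of `q` with parameter `p`. -/
noncomputable def geomMix (p : ℝ) (q : ℕ → ℝ) (n : ℕ) : ℝ :=
  ∑' k : ℕ, (1 - p) * p ^ k * convPow q k n

/-!
The mixture `f = ∑ₖ (1 - p) pᵏ q^{*k}` satisfies the renewal equation `f = (1 - p) δ₀ + p (q * f)`;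
moving the term `p q₀ f (n + 1)` to the left gives
`f (n + 1) = c ∑_{j ≤ n} q (j + 1) f (n - j)` with `c = p / (1 - p q₀)`.
A PH representation `(α, T)` of `q` with exit vector `t` is turned into one of `f` by restarting:
on absorption the chain re-enters with initial vector `c α`, i.e. it moves by `T + t (c α)ᵀ`.
Its mass function obeys the same recursion, and both start from `(1 - p) / (1 - p q₀)`.
-/

open Finset

namespace IsProbDist

variable {p q w : ℕ → ℝ} {P : ℕ → ℕ → ℝ}

theorem le_one (hp : IsProbDist p) (n : ℕ) : p n ≤ 1 :=
  le_hasSum hp.2 n fun m _ => hp.1 m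

theorem conv (hp : IsProbDist p) (hq : IsProbDist q) : IsProbDist (conv p q) := by
  refine ⟨fun n => sum_nonneg fun k _ => mul_nonneg (hp.1 k) (hq.1 _), ?_⟩
  have hnorm : ∀ {r : ℕ → ℝ}, IsProbDist r → Summable fun n => ‖r n‖ := fun hr => by
    simpa only [Real.norm_of_nonneg (hr.1 _)] using hr.2.summable
  have h := hasSum_sum_range_mul_of_summable_norm (hnorm hp) (hnorm hq)
  rwa [hp.2.tsum_eq, hq.2.tsum_eq, mul_one] at h

theorem convPow (hq : IsProbDist q) (k : ℕ) : IsProbDist (convPow q k) := by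
  induction k with
  | zero =>
    refine ⟨fun n => ?_, hasSum_ite_eq 0 (1 : ℝ)⟩
    show (0 : ℝ) ≤ if n = 0 then 1 else 0
    split_ifs <;> norm_num
  | succ k ih => exact hq.conv ih

theorem summable_mul_apply (hw : IsProbDist w) (hP : ∀ k, IsProbDist (P k)) (n : ℕ) :
    Summable fun k => w k * P k n :=
  hw.2.summable.of_nonneg_of_le (fun k => mul_nonneg (hw.1 k) ((hP k).1 n))
    fun k => mul_le_of_le_one_right (hw.1 k) ((hP k).le_one n)

theorem mixture (hw : IsProbDist w) (hP : ∀ k, IsProbDist (P k)) :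
    IsProbDist fun n => ∑' k, w k * P k n := by
  set F : ℕ × ℕ → ℝ := fun x => w x.1 * P x.1 x.2
  have hF : 0 ≤ F := fun x => mul_nonneg (hw.1 _) ((hP _).1 _)
  have hrow : ∀ k, HasSum (fun n => F (k, n)) (w k) := fun k => by
    simpa only [mul_one] using (hP k).2.mul_left (w k)
  have hF_summable : Summable F := (summable_prod_of_nonneg hF).2
    ⟨fun k => (hrow k).summable, by simpa only [(hrow _).tsum_eq] using hw.2.summable⟩
  have hF_sum : HasSum F 1 := by
    convert hF_summable.hasSum
    rw [hF_summable.tsum_prod, tsum_congr fun k => (hrow k).tsum_eq, hw.2.tsum_eq]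
  refine ⟨fun n => tsum_nonneg fun k => hF (k, n), ?_⟩
  exact ((Equiv.prodComm ℕ ℕ).hasSum_iff.2 hF_sum).prod_fiberwise
    fun n => (summable_mul_apply hw hP n).hasSum

end IsProbDist

section GeometricMixture

variable {p : ℝ} {q : ℕ → ℝ}

theorem isProbDist_geometric (hp₀ : 0 ≤ p) (hp₁ : p < 1) : IsProbDist fun k => (1 - p) * p ^ k := by
  refine ⟨fun k => mul_nonneg (by linarith) (pow_nonneg hp₀ k), ?_⟩
  simpa only [mul_inv_cancel₀ (sub_ne_zero.2 hp₁.ne')] using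
    (hasSum_geometric_of_lt_one hp₀ hp₁).mul_left (1 - p)

theorem IsProbDist.geomMix (hq : IsProbDist q) (hp₀ : 0 ≤ p) (hp₁ : p < 1) :
    IsProbDist (geomMix p q) :=
  (isProbDist_geometric hp₀ hp₁).mixture hq.convPow

theorem IsProbDist.mul_apply_lt_one (hq : IsProbDist q) (hp₁ : p < 1) (n : ℕ) : p * q n < 1 := by
  rcases le_total 0 p with hp₀ | hp₀
  · nlinarith [hq.le_one n, hq.1 n]
  · nlinarith [hq.1 n]

theorem geomMix_eq_add_conv (hq : IsProbDist q) (hp₀ : 0 ≤ p) (hp₁ : p < 1) (n : ℕ) :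
    geomMix p q n = (1 - p) * (if n = 0 then 1 else 0) + p * conv q (geomMix p q) n := by
  have hsummable := (isProbDist_geometric hp₀ hp₁).summable_mul_apply hq.convPow
  rw [geomMix, (hsummable n).tsum_eq_zero_add, pow_zero, mul_one]
  congr 1
  calc ∑' k, (1 - p) * p ^ (k + 1) * convPow q (k + 1) n
      = ∑' k, ∑ j ∈ range (n + 1), p * q j * ((1 - p) * p ^ k * convPow q k (n - j)) := by
        refine tsum_congr fun k => ?_
        rw [convPow, conv, mul_sum]
        exact sum_congr rfl fun j _ => by ring
    _ = p * conv q (geomMix p q) n := by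
        rw [Summable.tsum_finsetSum fun j _ => (hsummable (n - j)).mul_left (p * q j),
          conv, mul_sum]
        exact sum_congr rfl fun j _ => by rw [tsum_mul_left, geomMix, mul_assoc]

theorem geomMix_zero (hq : IsProbDist q) (hp₀ : 0 ≤ p) (hp₁ : p < 1) :
    geomMix p q 0 = (1 - p) / (1 - p * q 0) := by
  have h := geomMix_eq_add_conv hq hp₀ hp₁ 0
  rw [conv, sum_range_one, if_pos rfl] at h
  rw [eq_div_iff (sub_pos.2 (hq.mul_apply_lt_one hp₁ 0)).ne']
  linear_combination h

theorem geomMix_succ (hq : IsProbDist q) (hp₀ : 0 ≤ p) (hp₁ : p < 1) (n : ℕ) :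
    geomMix p q (n + 1) =
      p / (1 - p * q 0) * ∑ j ∈ range (n + 1), q (j + 1) * geomMix p q (n - j) := by
  have h := geomMix_eq_add_conv hq hp₀ hp₁ (n + 1)
  rw [conv, sum_range_succ', if_neg n.succ_ne_zero] at h
  simp only [Nat.succ_sub_succ, Nat.sub_zero] at h
  rw [div_mul_eq_mul_div, eq_div_iff (sub_pos.2 (hq.mul_apply_lt_one hp₁ 0)).ne']
  linear_combination h

end GeometricMixture

theorem eq_of_forall_succ_eq_sum {R : Type*} [NonUnitalNonAssocSemiring R] {a f g : ℕ → R}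
    (h₀ : f 0 = g 0) (hf : ∀ n, f (n + 1) = ∑ j ∈ range (n + 1), a j * f (n - j))
    (hg : ∀ n, g (n + 1) = ∑ j ∈ range (n + 1), a j * g (n - j)) : f = g := by
  funext n
  induction n using Nat.strong_induction_on with
  | _ n ih =>
    cases n with
    | zero => exact h₀
    | succ n => rw [hf, hg]; exact sum_congr rfl fun j _ => by rw [ih (n - j) (by omega)]

namespace Matrix

variable {ι R : Type*} [Fintype ι] [DecidableEq ι] [CommSemiring R]

theorem dotProduct_add_vecMulVec_pow_mulVec (T : Matrix ι ι R) (u β v w : ι → R) (n : ℕ) :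
    v ⬝ᵥ (T + vecMulVec u β) ^ n *ᵥ w = v ⬝ᵥ T ^ n *ᵥ w +
      ∑ j ∈ range n, (v ⬝ᵥ T ^ j *ᵥ u) * (β ⬝ᵥ (T + vecMulVec u β) ^ (n - 1 - j) *ᵥ w) := by
  induction n generalizing v with
  | zero => simp
  | succ n ih =>
    rw [pow_succ', ← mulVec_mulVec, dotProduct_mulVec, vecMul_add, vecMul_vecMulVec,
      add_dotProduct, ih, sum_range_succ', pow_succ', ← mulVec_mulVec, dotProduct_mulVec v T]
    have hshift : ∀ j ∈ range n, v ᵥ* T ⬝ᵥ T ^ j *ᵥ u * β ⬝ᵥ (T + vecMulVec u β) ^ (n - 1 - j) *ᵥ w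
        = v ⬝ᵥ T ^ (j + 1) *ᵥ u * β ⬝ᵥ (T + vecMulVec u β) ^ (n + 1 - 1 - (j + 1)) *ᵥ w :=
      fun j _ => by rw [pow_succ', ← mulVec_mulVec, dotProduct_mulVec v T, Nat.add_sub_cancel,
        Nat.sub_sub, add_comm 1 j]
    rw [sum_congr rfl hshift, smul_dotProduct, smul_eq_mul, pow_zero, one_mulVec,
      Nat.add_sub_cancel, Nat.sub_zero, add_assoc]

end Matrix

section PhaseType

variable {ι : Type*} [Fintype ι]

def exitVec (T : Matrix ι ι ℝ) : ι → ℝ := fun i => 1 - ∑ j, T i j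

def phMass [DecidableEq ι] (β : ι → ℝ) (T : Matrix ι ι ℝ) : ℕ → ℝ
  | 0 => 1 - ∑ i, β i
  | n + 1 => β ⬝ᵥ T ^ n *ᵥ exitVec T

def restartMatrix (T : Matrix ι ι ℝ) (β : ι → ℝ) : Matrix ι ι ℝ := T + vecMulVec (exitVec T) β

theorem eq_phMass_iff [DecidableEq ι] {p : ℕ → ℝ} {β : ι → ℝ} {T : Matrix ι ι ℝ} :
    p = phMass β T ↔ p 0 = 1 - ∑ i, β i ∧
      ∀ n, 1 ≤ n → p n = β ⬝ᵥ (T ^ (n - 1)).mulVec (fun i => 1 - ∑ j, T i j) := by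
  constructor
  · rintro rfl
    refine ⟨rfl, fun n hn => ?_⟩
    obtain ⟨k, rfl⟩ := Nat.exists_eq_add_of_le' hn
    rfl
  · rintro ⟨h₀, h⟩
    funext n
    cases n with
    | zero => exact h₀
    | succ n => exact h (n + 1) n.succ_pos

theorem isPH_iff {p : ℕ → ℝ} : IsPH p ↔ IsProbDist p ∧ ∃ m : ℕ, 1 ≤ m ∧
    ∃ (α : Fin m → ℝ) (T : Matrix (Fin m) (Fin m) ℝ),
      (∀ i, 0 ≤ α i) ∧ (∑ i, α i) ≤ 1 ∧ (∀ i j, 0 ≤ T i j) ∧ (∀ i, (∑ j, T i j) ≤ 1) ∧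
      p = phMass α T := by
  simp only [IsPH, eq_phMass_iff]

theorem phMass_smul_succ [DecidableEq ι] (c : ℝ) (β : ι → ℝ) (T : Matrix ι ι ℝ) (n : ℕ) :
    phMass (c • β) T (n + 1) = c * phMass β T (n + 1) :=
  smul_dotProduct c β _

theorem exitVec_restartMatrix (T : Matrix ι ι ℝ) (β : ι → ℝ) :
    exitVec (restartMatrix T β) = (1 - ∑ i, β i) • exitVec T := by
  funext i
  simp only [exitVec, restartMatrix, Matrix.add_apply, vecMulVec_apply, sum_add_distrib, ← mul_sum,
    Pi.smul_apply, smul_eq_mul]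
  ring

theorem exitVec_nonneg {T : Matrix ι ι ℝ} (hT : ∀ i, ∑ j, T i j ≤ 1) (i : ι) : 0 ≤ exitVec T i :=
  sub_nonneg.2 (hT i)

theorem restartMatrix_nonneg {T : Matrix ι ι ℝ} {β : ι → ℝ} (hT₀ : ∀ i j, 0 ≤ T i j)
    (hT : ∀ i, ∑ j, T i j ≤ 1) (hβ₀ : ∀ i, 0 ≤ β i) (i j : ι) : 0 ≤ restartMatrix T β i j :=
  add_nonneg (hT₀ i j) (mul_nonneg (exitVec_nonneg hT i) (hβ₀ j))

theorem sum_restartMatrix_le_one {T : Matrix ι ι ℝ} {β : ι → ℝ} (hT : ∀ i, ∑ j, T i j ≤ 1)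
    (hβ : ∑ i, β i ≤ 1) (i : ι) : ∑ j, restartMatrix T β i j ≤ 1 := by
  have h : exitVec (restartMatrix T β) i = (1 - ∑ i, β i) * exitVec T i :=
    congr_fun (exitVec_restartMatrix T β) i
  have h_nonneg := mul_nonneg (sub_nonneg.2 hβ) (exitVec_nonneg hT i)
  rw [← h] at h_nonneg
  exact sub_nonneg.1 h_nonneg

theorem phMass_restartMatrix_succ [DecidableEq ι] (β : ι → ℝ) (T : Matrix ι ι ℝ) (n : ℕ) :
    phMass β (restartMatrix T β) (n + 1) =
      ∑ j ∈ range (n + 1), phMass β T (j + 1) * phMass β (restartMatrix T β) (n - j) := by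
  have hshift : ∀ j ∈ range n, phMass β (restartMatrix T β) (n - j) =
      β ⬝ᵥ restartMatrix T β ^ (n - 1 - j) *ᵥ exitVec (restartMatrix T β) := fun j hj => by
    rw [show n - j = n - 1 - j + 1 by have := mem_range.1 hj; omega]
    rfl
  rw [sum_range_succ, sum_congr rfl fun j hj => by rw [hshift j hj], Nat.sub_self]
  simp only [phMass]
  rw [restartMatrix, dotProduct_add_vecMulVec_pow_mulVec, ← restartMatrix, exitVec_restartMatrix,
    mulVec_smul, dotProduct_smul, smul_eq_mul]
  ring

end PhaseType

/-- The class of discrete PH distributions is closed under geometric mixtures. -/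
theorem ph_closed_under_geometric_mixture (q : ℕ → ℝ) (p : ℝ)
    (hq : IsPH q) (hp : p ∈ Set.Ioo (0 : ℝ) 1) :
    IsPH (geomMix p q) := by
  obtain ⟨hp₀, hp₁⟩ := hp
  rw [isPH_iff] at hq
  obtain ⟨hq, m, hm, α, T, hα₀, hα, hT₀, hT, rfl⟩ := hq
  have hq₀ : phMass α T 0 = 1 - ∑ i, α i := rfl
  have hd : 0 < 1 - p * phMass α T 0 := sub_pos.2 (hq.mul_apply_lt_one hp₁ 0)
  set c := p / (1 - p * phMass α T 0) with hc
  have hcα₀ : ∀ i, 0 ≤ (c • α) i := fun i => mul_nonneg (by positivity) (hα₀ i)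
  have hcα_sum : ∑ i, (c • α) i = c * ∑ i, α i := by simp only [Pi.smul_apply, smul_eq_mul, mul_sum]
  have hcα : ∑ i, (c • α) i ≤ 1 := by
    rw [hcα_sum, hc, div_mul_eq_mul_div, div_le_one hd, hq₀]
    nlinarith
  refine isPH_iff.2 ⟨hq.geomMix hp₀.le hp₁, m, hm, c • α, restartMatrix T (c • α), hcα₀, hcα,
    restartMatrix_nonneg hT₀ hT hcα₀, sum_restartMatrix_le_one hT hcα, ?_⟩
  refine eq_of_forall_succ_eq_sum (a := fun j => c * phMass α T (j + 1)) ?_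
    (fun n => by rw [geomMix_succ hq hp₀.le hp₁, mul_sum]; simp only [mul_assoc, hc])
    (fun n => by simp only [phMass_restartMatrix_succ, phMass_smul_succ])
  show geomMix p (phMass α T) 0 = 1 - ∑ i, (c • α) i
  rw [geomMix_zero hq hp₀.le hp₁, hcα_sum, hc, div_mul_eq_mul_div, eq_sub_iff_add_eq,
    ← add_div, div_eq_one_iff_eq hd.ne', hq₀]
  ring
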